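/- For every λ > 0 and every g ∈ H¹, the translated–dilated bubble u(q) = λ·U(δ_λ(g⁻¹·q)) is a positive solution of the CR Yamabe equation on the Heisenberg group: X(X u) + Y(Y u) = −4u³ on all of ℂ×ℝ. -/

import Mathlib

open MeasureTheory Real

/-- The Heisenberg group law on `ℂ × ℝ`:
`(z,t)·(w,s) = (z + w, t + s + 2 Im(z·conj w))`. -/
def heisMul (a b : ℂ × ℝ) : ℂ × ℝ :=
  (a.1 + b.1, a.2 + b.2 + 2 * (a.1 * (starRingEnd ℂ) b.1).im)

/-- The Heisenberg group inverse: `(z,t)⁻¹ = (−z, −t)`. -/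
def heisInv (a : ℂ × ℝ) : ℂ × ℝ := (-a.1, -a.2)

/-- Heisenberg dilations `δ_λ(z,t) = (λz, λ²t)`. -/
def heisDil (l : ℝ) (p : ℂ × ℝ) : ℂ × ℝ := ((l : ℂ) * p.1, l ^ 2 * p.2)

/-- The left-invariant Heisenberg vector field `X f = ∂f/∂x + 2y ∂f/∂t`. -/
noncomputable def heisX (f : ℂ × ℝ → ℝ) (p : ℂ × ℝ) : ℝ :=
  fderiv ℝ f p ((1 : ℂ), (0 : ℝ)) + 2 * p.1.im * fderiv ℝ f p ((0 : ℂ), (1 : ℝ))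

/-- The left-invariant Heisenberg vector field `Y f = ∂f/∂y − 2x ∂f/∂t`. -/
noncomputable def heisY (f : ℂ × ℝ → ℝ) (p : ℂ × ℝ) : ℝ :=
  fderiv ℝ f p (Complex.I, (0 : ℝ)) - 2 * p.1.re * fderiv ℝ f p ((0 : ℂ), (1 : ℝ))

/-- The Jerison–Lee bubble `U(z,t) = (t² + (1+|z|²)²)^{-1/2}` on `H¹ = ℂ × ℝ`. -/
noncomputable def jerisonLeeBubble (p : ℂ × ℝ) : ℝ :=
  (p.2 ^ 2 + (1 + ‖p.1‖ ^ 2) ^ 2) ^ (-(1 / 2 : ℝ))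

/-- The translated–dilated bubble `u(q) = λ·U(δ_λ(g⁻¹·q))`. -/
noncomputable def bubble (l : ℝ) (g : ℂ × ℝ) (q : ℂ × ℝ) : ℝ :=
  l * jerisonLeeBubble (heisDil l (heisMul (heisInv g) q))

/-!
The fields `X`, `Y` are left-invariant and homogeneous of degree one under the dilations:
`X (f ∘ δ_λ) = λ (X f) ∘ δ_λ`. Hence the sublaplacian `𝓛 = X² + Y²` commutes with left
translations and `𝓛 (f ∘ δ_λ) = λ² (𝓛 f) ∘ δ_λ`, so `𝓛 u = λ³ (𝓛 U) ∘ δ_λ ∘ τ_{g⁻¹}` and it is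
enough to show `𝓛 U = -4 U³`. Writing `U = F^{-1/2}` with `F = t² + (1 + |z|²)²`, one finds
`X F = 4 P`, `Y F = 4 Q` with `X P = Y Q = 1 + 3|z|²` and `P² + Q² = |z|² F`, which gives
`𝓛 U = -4 (1 + 3|z|²) F^{-3/2} + 12 |z|² F^{-3/2} = -4 F^{-3/2}`.
-/

theorem fderiv_comp_add_continuousLinearEquiv {𝕜 E F G : Type*} [NontriviallyNormedField 𝕜]
    [NormedAddCommGroup E] [NormedSpace 𝕜 E] [NormedAddCommGroup F] [NormedSpace 𝕜 F]
    [NormedAddCommGroup G] [NormedSpace 𝕜 G] (f : F → G) (a : F) (A : E ≃L[𝕜] F) (x : E) :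
    fderiv 𝕜 (fun y => f (a + A y)) x = (fderiv 𝕜 f (a + A x)).comp (A : E →L[𝕜] F) := by
  rw [← fderiv_comp_add_left a (f := f)]
  exact A.comp_right_fderiv (f := fun z => f (a + z))

section Coordinates

variable {E : Type*} [NormedAddCommGroup E] [NormedSpace ℝ E]

theorem fderiv_re_fst_apply (p v : ℂ × E) :
    fderiv ℝ (fun q : ℂ × E => q.1.re) p v = v.1.re := by
  rw [HasFDerivAt.fderiv (f := fun q : ℂ × E => q.1.re)
    (Complex.reCLM.comp (ContinuousLinearMap.fst ℝ ℂ E)).hasFDerivAt]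
  simp

theorem fderiv_im_fst_apply (p v : ℂ × E) :
    fderiv ℝ (fun q : ℂ × E => q.1.im) p v = v.1.im := by
  rw [HasFDerivAt.fderiv (f := fun q : ℂ × E => q.1.im)
    (Complex.imCLM.comp (ContinuousLinearMap.fst ℝ ℂ E)).hasFDerivAt]
  simp

end Coordinates

theorem heisX_eq_fderiv_apply (f : ℂ × ℝ → ℝ) (p : ℂ × ℝ) :
    heisX f p = fderiv ℝ f p (1, 2 * p.1.im) := by
  have : ((1 : ℂ), 2 * p.1.im) = ((1 : ℂ), (0 : ℝ)) + (2 * p.1.im) • ((0 : ℂ), (1 : ℝ)) := by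
    simp
  rw [heisX, this, map_add, map_smul, smul_eq_mul]

theorem heisY_eq_fderiv_apply (f : ℂ × ℝ → ℝ) (p : ℂ × ℝ) :
    heisY f p = fderiv ℝ f p (Complex.I, -2 * p.1.re) := by
  have : (Complex.I, -2 * p.1.re) = (Complex.I, (0 : ℝ)) + (-2 * p.1.re) • ((0 : ℂ), (1 : ℝ)) := by
    simp
  rw [heisY, this, map_add, map_smul, smul_eq_mul]
  ring

theorem heisX_const_mul (c : ℝ) (f : ℂ × ℝ → ℝ) :
    heisX (fun q => c * f q) = fun q => c * heisX f q := by
  ext q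
  rw [heisX_eq_fderiv_apply, heisX_eq_fderiv_apply,
    show (fun q => c * f q) = c • f from rfl, fderiv_const_smul_field]
  rfl

theorem heisY_const_mul (c : ℝ) (f : ℂ × ℝ → ℝ) :
    heisY (fun q => c * f q) = fun q => c * heisY f q := by
  ext q
  rw [heisY_eq_fderiv_apply, heisY_eq_fderiv_apply,
    show (fun q => c * f q) = c • f from rfl, fderiv_const_smul_field]
  rfl

section Derivation

variable {f g : ℂ × ℝ → ℝ} {p : ℂ × ℝ}

theorem heisX_mul (hf : DifferentiableAt ℝ f p) (hg : DifferentiableAt ℝ g p) :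
    heisX (fun q => f q * g q) p = f p * heisX g p + g p * heisX f p := by
  simp [heisX_eq_fderiv_apply, fderiv_fun_mul hf hg]

theorem heisY_mul (hf : DifferentiableAt ℝ f p) (hg : DifferentiableAt ℝ g p) :
    heisY (fun q => f q * g q) p = f p * heisY g p + g p * heisY f p := by
  simp [heisY_eq_fderiv_apply, fderiv_fun_mul hf hg]

theorem heisX_rpow_const (hf : DifferentiableAt ℝ f p) (hp : f p ≠ 0) (r : ℝ) :
    heisX (fun q => f q ^ r) p = r * f p ^ (r - 1) * heisX f p := by
  simp [heisX_eq_fderiv_apply, (hf.hasFDerivAt.rpow_const (p := r) (Or.inl hp)).fderiv]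

theorem heisY_rpow_const (hf : DifferentiableAt ℝ f p) (hp : f p ≠ 0) (r : ℝ) :
    heisY (fun q => f q ^ r) p = r * f p ^ (r - 1) * heisY f p := by
  simp [heisY_eq_fderiv_apply, (hf.hasFDerivAt.rpow_const (p := r) (Or.inl hp)).fderiv]

end Derivation

noncomputable def heisShear (g : ℂ × ℝ) : (ℂ × ℝ) ≃L[ℝ] ℂ × ℝ :=
  (ContinuousLinearEquiv.refl ℝ ℂ).skewProd (ContinuousLinearEquiv.refl ℝ ℝ)
    (2 • (g.1.im • Complex.reCLM - g.1.re • Complex.imCLM)) -- `w ↦ 2 Im (g.1 * conj w)`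

theorem heisMul_eq_add_heisShear (g q : ℂ × ℝ) : heisMul g q = g + heisShear g q := by
  ext <;> simp [heisMul, heisShear]; ring

noncomputable def heisDilEquiv {l : ℝ} (hl : l ≠ 0) : (ℂ × ℝ) ≃L[ℝ] ℂ × ℝ :=
  (ContinuousLinearEquiv.smulLeft (Units.mk0 l hl)).prodCongr
    (ContinuousLinearEquiv.smulLeft (Units.mk0 (l ^ 2) (pow_ne_zero 2 hl)))

theorem coe_heisDilEquiv {l : ℝ} (hl : l ≠ 0) : ⇑(heisDilEquiv hl) = heisDil l := by
  ext <;> simp [heisDilEquiv, heisDil, Units.smul_def, Complex.real_smul]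

theorem heisX_comp_heisMul (f : ℂ × ℝ → ℝ) (g : ℂ × ℝ) :
    heisX (fun q => f (heisMul g q)) = fun q => heisX f (heisMul g q) := by
  ext q
  simp only [heisX_eq_fderiv_apply, heisMul_eq_add_heisShear,
    fderiv_comp_add_continuousLinearEquiv, ContinuousLinearMap.comp_apply]
  congr 1
  ext <;> simp [heisShear]; ring

theorem heisY_comp_heisMul (f : ℂ × ℝ → ℝ) (g : ℂ × ℝ) :
    heisY (fun q => f (heisMul g q)) = fun q => heisY f (heisMul g q) := by
  ext q
  simp only [heisY_eq_fderiv_apply, heisMul_eq_add_heisShear,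
    fderiv_comp_add_continuousLinearEquiv, ContinuousLinearMap.comp_apply]
  congr 1
  ext <;> simp [heisShear]; ring

theorem heisX_comp_heisDil (f : ℂ × ℝ → ℝ) {l : ℝ} (hl : l ≠ 0) :
    heisX (fun q => f (heisDil l q)) = fun q => l * heisX f (heisDil l q) := by
  ext q
  rw [← coe_heisDilEquiv hl, heisX_eq_fderiv_apply, heisX_eq_fderiv_apply, ← smul_eq_mul l,
    ← map_smul, show (fun q => f (heisDilEquiv hl q)) = f ∘ heisDilEquiv hl from rfl,
    (heisDilEquiv hl).comp_right_fderiv, ContinuousLinearMap.comp_apply]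
  congr 1
  ext <;> simp [heisDilEquiv, Units.smul_def]; ring

theorem heisY_comp_heisDil (f : ℂ × ℝ → ℝ) {l : ℝ} (hl : l ≠ 0) :
    heisY (fun q => f (heisDil l q)) = fun q => l * heisY f (heisDil l q) := by
  ext q
  rw [← coe_heisDilEquiv hl, heisY_eq_fderiv_apply, heisY_eq_fderiv_apply, ← smul_eq_mul l,
    ← map_smul, show (fun q => f (heisDilEquiv hl q)) = f ∘ heisDilEquiv hl from rfl,
    (heisDilEquiv hl).comp_right_fderiv, ContinuousLinearMap.comp_apply]
  congr 1
  ext <;> simp [heisDilEquiv, Units.smul_def]; ring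

noncomputable def heisSubLaplacian (f : ℂ × ℝ → ℝ) (p : ℂ × ℝ) : ℝ :=
  heisX (heisX f) p + heisY (heisY f) p

theorem heisSubLaplacian_const_mul (c : ℝ) (f : ℂ × ℝ → ℝ) :
    heisSubLaplacian (fun q => c * f q) = fun q => c * heisSubLaplacian f q := by
  ext q
  simp only [heisSubLaplacian, heisX_const_mul, heisY_const_mul]
  ring

theorem heisSubLaplacian_comp_heisMul (f : ℂ × ℝ → ℝ) (g : ℂ × ℝ) :
    heisSubLaplacian (fun q => f (heisMul g q)) = fun q => heisSubLaplacian f (heisMul g q) := by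
  ext q
  simp only [heisSubLaplacian, heisX_comp_heisMul, heisY_comp_heisMul]

theorem heisSubLaplacian_comp_heisDil (f : ℂ × ℝ → ℝ) {l : ℝ} (hl : l ≠ 0) :
    heisSubLaplacian (fun q => f (heisDil l q)) =
      fun q => l ^ 2 * heisSubLaplacian f (heisDil l q) := by
  ext q
  simp only [heisSubLaplacian, heisX_comp_heisDil _ hl, heisY_comp_heisDil _ hl,
    heisX_const_mul, heisY_const_mul]
  ring

namespace JerisonLee

def denom (p : ℂ × ℝ) : ℝ := p.2 ^ 2 + (1 + (p.1.re ^ 2 + p.1.im ^ 2)) ^ 2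

def numX (p : ℂ × ℝ) : ℝ := p.1.re * (1 + (p.1.re ^ 2 + p.1.im ^ 2)) + p.1.im * p.2

def numY (p : ℂ × ℝ) : ℝ := p.1.im * (1 + (p.1.re ^ 2 + p.1.im ^ 2)) - p.1.re * p.2

theorem denom_pos (p : ℂ × ℝ) : 0 < denom p := by
  unfold denom; positivity

theorem differentiable_denom : Differentiable ℝ denom := by
  unfold denom; fun_prop

theorem differentiable_numX : Differentiable ℝ numX := by
  unfold numX; fun_prop

theorem differentiable_numY : Differentiable ℝ numY := by
  unfold numY; fun_prop

theorem heisX_denom (p : ℂ × ℝ) : heisX denom p = 4 * numX p := by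
  rw [heisX_eq_fderiv_apply]
  unfold denom
  simp (disch := fun_prop) [numX, fderiv_fun_add, fderiv_fun_pow, fderiv_re_fst_apply,
    fderiv_im_fst_apply, fderiv_snd]
  ring

theorem heisY_denom (p : ℂ × ℝ) : heisY denom p = 4 * numY p := by
  rw [heisY_eq_fderiv_apply]
  unfold denom
  simp (disch := fun_prop) [numY, fderiv_fun_add, fderiv_fun_pow, fderiv_re_fst_apply,
    fderiv_im_fst_apply, fderiv_snd]
  ring

theorem heisX_numX (p : ℂ × ℝ) : heisX numX p = 1 + 3 * (p.1.re ^ 2 + p.1.im ^ 2) := by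
  rw [heisX_eq_fderiv_apply]
  unfold numX
  simp (disch := fun_prop) [fderiv_fun_add, fderiv_fun_mul, fderiv_fun_pow,
    fderiv_re_fst_apply, fderiv_im_fst_apply, fderiv_snd]
  ring

theorem heisY_numY (p : ℂ × ℝ) : heisY numY p = 1 + 3 * (p.1.re ^ 2 + p.1.im ^ 2) := by
  rw [heisY_eq_fderiv_apply]
  unfold numY
  simp (disch := fun_prop) [fderiv_fun_sub, fderiv_fun_add, fderiv_fun_mul, fderiv_fun_pow,
    fderiv_re_fst_apply, fderiv_im_fst_apply, fderiv_snd]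
  ring

theorem numX_sq_add_numY_sq (p : ℂ × ℝ) :
    numX p ^ 2 + numY p ^ 2 = (p.1.re ^ 2 + p.1.im ^ 2) * denom p := by
  unfold numX numY denom; ring

end JerisonLee

open JerisonLee

theorem jerisonLeeBubble_eq_denom_rpow :
    jerisonLeeBubble = fun p => denom p ^ (-(1 / 2) : ℝ) := by
  ext p
  rw [jerisonLeeBubble, denom, Complex.sq_norm, Complex.normSq_apply]
  ring_nf

theorem jerisonLeeBubble_pos (p : ℂ × ℝ) : 0 < jerisonLeeBubble p := by
  rw [jerisonLeeBubble_eq_denom_rpow]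
  exact rpow_pos_of_pos (denom_pos p) _

theorem heisX_jerisonLeeBubble :
    heisX jerisonLeeBubble = fun p => -2 * numX p * denom p ^ (-(3 / 2) : ℝ) := by
  ext p
  rw [jerisonLeeBubble_eq_denom_rpow,
    heisX_rpow_const (differentiable_denom p) (denom_pos p).ne', heisX_denom]
  norm_num
  ring

theorem heisY_jerisonLeeBubble :
    heisY jerisonLeeBubble = fun p => -2 * numY p * denom p ^ (-(3 / 2) : ℝ) := by
  ext p
  rw [jerisonLeeBubble_eq_denom_rpow,
    heisY_rpow_const (differentiable_denom p) (denom_pos p).ne', heisY_denom]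
  norm_num
  ring

theorem heisX_heisX_jerisonLeeBubble (p : ℂ × ℝ) :
    heisX (heisX jerisonLeeBubble) p =
      -2 * (1 + 3 * (p.1.re ^ 2 + p.1.im ^ 2)) * denom p ^ (-(3 / 2) : ℝ)
        + 12 * numX p ^ 2 * denom p ^ (-(5 / 2) : ℝ) := by
  have hF := differentiable_denom p
  have hF0 := (denom_pos p).ne'
  rw [heisX_jerisonLeeBubble, heisX_mul ((differentiable_numX p).const_mul _)
    (hF.rpow_const (Or.inl hF0)), heisX_const_mul, heisX_rpow_const hF hF0, heisX_denom]
  norm_num [heisX_numX]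
  ring

theorem heisY_heisY_jerisonLeeBubble (p : ℂ × ℝ) :
    heisY (heisY jerisonLeeBubble) p =
      -2 * (1 + 3 * (p.1.re ^ 2 + p.1.im ^ 2)) * denom p ^ (-(3 / 2) : ℝ)
        + 12 * numY p ^ 2 * denom p ^ (-(5 / 2) : ℝ) := by
  have hF := differentiable_denom p
  have hF0 := (denom_pos p).ne'
  rw [heisY_jerisonLeeBubble, heisY_mul ((differentiable_numY p).const_mul _)
    (hF.rpow_const (Or.inl hF0)), heisY_const_mul, heisY_rpow_const hF hF0, heisY_denom]
  norm_num [heisY_numY]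
  ring

theorem heisSubLaplacian_jerisonLeeBubble (p : ℂ × ℝ) :
    heisSubLaplacian jerisonLeeBubble p = -4 * jerisonLeeBubble p ^ 3 := by
  have hF := denom_pos p
  have hcube : (denom p ^ (-(1 / 2) : ℝ)) ^ 3 = denom p ^ (-(3 / 2) : ℝ) := by
    rw [← rpow_natCast, ← rpow_mul hF.le]
    norm_num
  have hshift : denom p ^ (-(5 / 2) : ℝ) * denom p = denom p ^ (-(3 / 2) : ℝ) := by
    rw [← rpow_add_one hF.ne']
    norm_num
  rw [heisSubLaplacian, heisX_heisX_jerisonLeeBubble, heisY_heisY_jerisonLeeBubble,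
    jerisonLeeBubble_eq_denom_rpow, hcube]
  linear_combination 12 * numX_sq_add_numY_sq p * denom p ^ (-(5 / 2) : ℝ)
    + 12 * (p.1.re ^ 2 + p.1.im ^ 2) * hshift

theorem heisSubLaplacian_bubble {l : ℝ} (hl : l ≠ 0) (g q : ℂ × ℝ) :
    heisSubLaplacian (bubble l g) q =
      l ^ 3 * heisSubLaplacian jerisonLeeBubble (heisDil l (heisMul (heisInv g) q)) := by
  rw [show bubble l g = fun q => l * jerisonLeeBubble (heisDil l (heisMul (heisInv g) q)) from rfl,
    heisSubLaplacian_const_mul,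
    heisSubLaplacian_comp_heisMul (fun p => jerisonLeeBubble (heisDil l p)),
    heisSubLaplacian_comp_heisDil _ hl]
  ring

/-- For every `λ > 0` and `g ∈ H¹`, the translated–dilated bubble
`u(q) = λ·U(δ_λ(g⁻¹·q))` is a positive solution of the CR Yamabe equation:
`X(Xu) + Y(Yu) = −4u³` on all of `ℂ × ℝ`. -/
theorem bubble_solves_CR_Yamabe (l : ℝ) (hl : 0 < l) (g : ℂ × ℝ) :
    ∀ q : ℂ × ℝ,
      0 < bubble l g q ∧
      heisX (heisX (bubble l g)) q + heisY (heisY (bubble l g)) q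
        = -4 * (bubble l g q) ^ 3 := by
  intro q
  refine ⟨mul_pos hl (jerisonLeeBubble_pos _), ?_⟩
  change heisSubLaplacian (bubble l g) q = _
  rw [heisSubLaplacian_bubble hl.ne', heisSubLaplacian_jerisonLeeBubble, bubble]
  ring
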